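/- Let n ≥ 2 be an integer. Consider the feasible set of the SDP relaxation (SDP1) augmented with the first-level RLT inequalities: all (x, y, X, Y, γ) with x, y ∈ [0,1]^n, X, Y real symmetric n×n matrices, X − x xᵀ and Y − y yᵀ positive semidefinite, X_{ii} ≤ x_i and Y_{ii} ≤ y_i for all i, X_{ii} − 2X_{ij} + X_{jj} + Y_{ii} − 2Y_{ij} + Y_{jj} ≥ γ for all 1 ≤ i < j ≤ n, and additionally X_{ij} ≥ 0, X_{ij} ≥ x_i + x_j − 1, Y_{ij} ≥ 0, Y_{ij} ≥ y_i + y_j − 1 for all 1 ≤ i < j ≤ n. Then the maximum value of γ over this augmented set is still attained and equals 1 + 1/(n−1); i.e., adding the first-level RLT constraints does not improve the bound given by (SDP1). -/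

import Mathlib

/-!
Summing the separation constraints over all ordered pairs `i ≠ j` gives
`n (n - 1) γ ≤ ∑ᵢⱼ (Xᵢᵢ - 2Xᵢⱼ + Xⱼⱼ) + (same for Y)`. For one coordinate,
with `s = ∑ᵢ xᵢ`, the right-hand side is `2n tr X - 2 𝟙ᵀX𝟙 ≤ 2ns - 2s² ≤ n²/2`,
using `tr X ≤ s` and `𝟙ᵀ(X - xxᵀ)𝟙 ≥ 0`; hence `γ ≤ n / (n - 1)`. The bound is
attained at `x = y = ½𝟙`, `X = Y = ¼J + (nI - J) / (4(n - 1))`, whose off-diagonal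
entries `(n - 2) / (4(n - 1))` are nonnegative, so the RLT inequalities hold as well.
-/

open Matrix Finset

section
variable {ι : Type*} [Fintype ι]

theorem posSemidef_card_smul_one_sub_ones [DecidableEq ι] :
    ((Fintype.card ι : ℝ) • (1 : Matrix ι ι ℝ) - of fun _ _ => 1).PosSemidef := by
  rw [posSemidef_iff_dotProduct_mulVec]
  refine ⟨?_, fun v => ?_⟩
  · ext i j
    simp [one_apply, eq_comm]
  · have hform : star v ⬝ᵥ ((Fintype.card ι : ℝ) • (1 : Matrix ι ι ℝ) - of fun _ _ => 1) *ᵥ v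
        = Fintype.card ι * ∑ i, v i ^ 2 - (∑ i, v i) ^ 2 := by
      simp only [dotProduct, mulVec, Pi.star_apply, star_trivial, Matrix.sub_apply, Matrix.smul_apply,
        one_apply, of_apply, smul_eq_mul, mul_ite, mul_one, mul_zero, ite_mul, zero_mul, one_mul,
        mul_sub, sub_mul, sum_sub_distrib, sum_ite_eq, mem_univ, if_true, mul_sum, sum_mul, sq]
      congr 1
      · exact sum_congr rfl fun i _ => by ring
      · exact sum_comm
    rw [hform, sub_nonneg]
    simpa using sq_sum_le_card_mul_sum_sq (s := (univ : Finset ι)) (f := v)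

theorem sq_sum_le_sum_sum_of_posSemidef {x : ι → ℝ} {X : Matrix ι ι ℝ}
    (hX : (X - vecMulVec x x).PosSemidef) : (∑ i, x i) ^ 2 ≤ ∑ i, ∑ j, X i j := by
  simpa [dotProduct, mulVec, vecMulVec_apply, sq, sum_mul_sum]
    using hX.dotProduct_mulVec_nonneg 1

theorem sum_sum_sqDist_le_of_posSemidef {x : ι → ℝ} {X : Matrix ι ι ℝ}
    (hX : (X - vecMulVec x x).PosSemidef) (hdiag : ∀ i, X i i ≤ x i) :
    ∑ i, ∑ j, (X i i - 2 * X i j + X j j) ≤ (Fintype.card ι : ℝ) ^ 2 / 2 := by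
  have hexpand : ∑ i, ∑ j, (X i i - 2 * X i j + X j j)
      = 2 * Fintype.card ι * ∑ i, X i i - 2 * ∑ i, ∑ j, X i j := by
    simp only [sum_add_distrib, sum_sub_distrib, ← mul_sum, sum_const,
      card_univ, nsmul_eq_mul]
    ring
  have htrace : ∑ i, X i i ≤ ∑ i, x i := sum_le_sum fun i _ => hdiag i
  have hsum := sq_sum_le_sum_sum_of_posSemidef hX
  have hcard : (0 : ℝ) ≤ Fintype.card ι := Nat.cast_nonneg _
  rw [hexpand]
  nlinarith [sq_nonneg (2 * ∑ i, x i - Fintype.card ι)]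

theorem card_mul_card_sub_one_mul_le_sum_sum [DecidableEq ι] {f : ι → ι → ℝ} {γ : ℝ}
    (hdiag : ∀ i, f i i = 0) (hoff : ∀ i j, i ≠ j → γ ≤ f i j) :
    Fintype.card ι * (Fintype.card ι - 1) * γ ≤ ∑ i, ∑ j, f i j := by
  have hrow : ∀ i, (Fintype.card ι - 1) * γ ≤ ∑ j, f i j := by
    intro i
    rw [← sum_erase univ (hdiag i)]
    have h := card_nsmul_le_sum (univ.erase i) (f i) γ
      fun j hj => hoff i j (ne_of_mem_erase hj).symm
    rwa [card_erase_of_mem (mem_univ i), card_univ, nsmul_eq_mul,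
      Nat.cast_sub (Fintype.card_pos_iff.mpr ⟨i⟩), Nat.cast_one] at h
  calc (Fintype.card ι : ℝ) * (Fintype.card ι - 1) * γ = ∑ _i : ι, (Fintype.card ι - 1) * γ := by
        simp only [sum_const, card_univ, nsmul_eq_mul]
        ring
    _ ≤ ∑ i, ∑ j, f i j := sum_le_sum fun i _ => hrow i

theorem card_mul_card_sub_one_mul_le_sq {x y : ι → ℝ} {X Y : Matrix ι ι ℝ} {γ : ℝ}
    (hX : (X - vecMulVec x x).PosSemidef) (hY : (Y - vecMulVec y y).PosSemidef)
    (hXdiag : ∀ i, X i i ≤ x i) (hYdiag : ∀ i, Y i i ≤ y i)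
    (hγ : ∀ i j, i ≠ j → γ ≤ X i i - 2 * X i j + X j j + Y i i - 2 * Y i j + Y j j) :
    Fintype.card ι * (Fintype.card ι - 1) * γ ≤ (Fintype.card ι : ℝ) ^ 2 := by
  classical
  have hpairs := card_mul_card_sub_one_mul_le_sum_sum
    (f := fun i j => (X i i - 2 * X i j + X j j) + (Y i i - 2 * Y i j + Y j j))
    (fun i => by ring) fun i j hij => by linarith [hγ i j hij]
  rw [sum_congr rfl fun i _ => sum_add_distrib, sum_add_distrib] at hpairs
  linarith [sum_sum_sqDist_le_of_posSemidef hX hXdiag, sum_sum_sqDist_le_of_posSemidef hY hYdiag]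

variable [DecidableEq ι]

noncomputable def liftAtHalf (c : ℝ) : Matrix ι ι ℝ :=
  vecMulVec (fun _ => 1 / 2) (fun _ => 1 / 2) + c • ((Fintype.card ι : ℝ) • 1 - of fun _ _ => 1)

theorem liftAtHalf_apply_self (c : ℝ) (i : ι) :
    liftAtHalf c i i = 1 / 4 + c * (Fintype.card ι - 1) := by
  simp only [liftAtHalf, Matrix.add_apply, vecMulVec_apply, Matrix.smul_apply, Matrix.sub_apply,
    one_apply_eq, of_apply, smul_eq_mul]
  ring

theorem liftAtHalf_apply_of_ne (c : ℝ) {i j : ι} (hij : i ≠ j) : liftAtHalf c i j = 1 / 4 - c := by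
  simp only [liftAtHalf, Matrix.add_apply, vecMulVec_apply, Matrix.smul_apply, Matrix.sub_apply,
    one_apply_ne hij, of_apply, smul_eq_mul]
  ring

theorem liftAtHalf_isSymm (c : ℝ) : (liftAtHalf c : Matrix ι ι ℝ).IsSymm := by
  ext i j
  by_cases hij : i = j
  · rw [transpose_apply, hij]
  · rw [transpose_apply, liftAtHalf_apply_of_ne c hij, liftAtHalf_apply_of_ne c (Ne.symm hij)]

theorem posSemidef_liftAtHalf_sub {c : ℝ} (hc : 0 ≤ c) :
    (liftAtHalf c - vecMulVec (fun _ : ι => (1 : ℝ) / 2) (fun _ => 1 / 2)).PosSemidef := by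
  rw [liftAtHalf, add_sub_cancel_left]
  exact posSemidef_card_smul_one_sub_ones.smul hc

end

/-- Adding the first-level RLT inequalities to the SDP relaxation (SDP1) of the circle
packing problem does not improve the bound: the optimal value is still attained and
equals `1 + 1/(n-1)` for all `n ≥ 2`. -/
theorem stmt_10 (n : ℕ) (hn : 2 ≤ n) :
    IsGreatest {γ : ℝ | ∃ (x y : Fin n → ℝ) (X Y : Matrix (Fin n) (Fin n) ℝ),
      (∀ i, 0 ≤ x i ∧ x i ≤ 1) ∧ (∀ i, 0 ≤ y i ∧ y i ≤ 1) ∧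
      X.IsSymm ∧ Y.IsSymm ∧
      (X - Matrix.vecMulVec x x).PosSemidef ∧
      (Y - Matrix.vecMulVec y y).PosSemidef ∧
      (∀ i, X i i ≤ x i ∧ Y i i ≤ y i) ∧
      (∀ i j : Fin n, i < j →
        X i i - 2 * X i j + X j j + Y i i - 2 * Y i j + Y j j ≥ γ) ∧
      (∀ i j : Fin n, i < j →
        X i j ≥ 0 ∧ X i j ≥ x i + x j - 1 ∧ Y i j ≥ 0 ∧ Y i j ≥ y i + y j - 1)}
    (1 + 1 / ((n : ℝ) - 1)) := by
  have hn2 : (2 : ℝ) ≤ n := by exact_mod_cast hn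
  have hn1 : (0 : ℝ) < n - 1 := by linarith
  refine ⟨?_, ?_⟩
  · obtain ⟨c, hc0, hc⟩ : ∃ c : ℝ, 0 ≤ c ∧ 4 * c * (n - 1) = 1 :=
      ⟨1 / (4 * (n - 1)), by positivity, by field_simp⟩
    have hdiag : ∀ i, liftAtHalf (ι := Fin n) c i i = 1 / 2 := fun i => by
      rw [liftAtHalf_apply_self, Fintype.card_fin]
      linarith
    have hoff : ∀ i j : Fin n, i < j → liftAtHalf c i j = 1 / 4 - c := fun i j hij =>
      liftAtHalf_apply_of_ne c hij.ne
    refine ⟨_, _, _, _, fun _ => by norm_num, fun _ => by norm_num, liftAtHalf_isSymm c,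
      liftAtHalf_isSymm c, posSemidef_liftAtHalf_sub hc0, posSemidef_liftAtHalf_sub hc0,
      fun i => by simp [hdiag], fun i j hij => ?_, fun i j hij => ?_⟩
    · have h4c : 1 / ((n : ℝ) - 1) = 4 * c := by
        rw [div_eq_iff hn1.ne']
        linarith
      rw [hdiag, hdiag, hoff i j hij, h4c]
      linarith
    · have hc4 : c ≤ 1 / 4 := by nlinarith
      rw [hoff i j hij]
      refine ⟨?_, ?_, ?_, ?_⟩ <;> norm_num <;> linarith
  · rintro γ ⟨x, y, X, Y, -, -, hXs, hYs, hX, hY, hdiag, hγ, -⟩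
    have hpairs : ∀ i j, i ≠ j → γ ≤ X i i - 2 * X i j + X j j + Y i i - 2 * Y i j + Y j j := by
      intro i j hij
      rcases hij.lt_or_gt with hlt | hgt
      · exact hγ i j hlt
      · have := hγ j i hgt
        rw [hXs.apply i j, hYs.apply i j] at this
        linarith
    have hbound := card_mul_card_sub_one_mul_le_sq hX hY (fun i => (hdiag i).1)
      (fun i => (hdiag i).2) hpairs
    rw [Fintype.card_fin] at hbound
    rw [one_add_div hn1.ne', sub_add_cancel, le_div_iff₀ hn1]
    nlinarith
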